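/- arXiv:2411.04247 — 2 statements merged into one kernel-verified Lean document; each statement's English description precedes it below -/
import Mathlib

section
/- Let H be a complex vector space with a Hermitian sesquilinear form [·,·], and let W₁, W₂ : H → H be linear maps that agree on the set F₊₊ = {f : [f,f] > 0}, which is assumed nonempty. Then W₁ = W₂ on all of H. -/
/-- Linear operators agreeing on a nonempty set of positive vectors agree
everywhere. -/
theorem agree_on_positive_vectors (H : Type*) [AddCommGroup H] [Module ℂ H]
    (B : H →ₗ⋆[ℂ] H →ₗ[ℂ] ℂ) (hB : B.IsSymm)
    (hne : ∃ f : H, 0 < (B f f).re)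
    (W₁ W₂ : H →ₗ[ℂ] H)
    (hagree : ∀ f : H, 0 < (B f f).re → W₁ f = W₂ f) :
    W₁ = W₂ := by
  obtain ⟨f, hf⟩ := hne
  ext g
  set a := (B f f).re with ha
  set b := (B f g).re + (B g f).re with hb
  set c := (B g g).re with hc
  have key : ∀ ε : ℝ, (B (f + (ε:ℂ) • g) (f + (ε:ℂ) • g)).re
      = a + ε * b + ε^2 * c := by
    intro ε
    simp only [map_add, LinearMap.map_smulₛₗ, LinearMap.add_apply, LinearMap.smul_apply,
      map_smul, smul_eq_mul, Complex.add_re, Complex.mul_re, Complex.conj_ofReal,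
      Complex.ofReal_re, Complex.ofReal_im]
    ring
  set ε : ℝ := a / (|b| + |c| + a + 1) with hε
  have hden : 0 < |b| + |c| + a + 1 := by positivity
  have hεpos : 0 < ε := div_pos hf hden
  have hεle : ε ≤ 1 := by
    rw [hε, div_le_one hden]; nlinarith [abs_nonneg b, abs_nonneg c]
  have hεsmall : ε * (|b| + |c|) < a := by
    rw [hε, div_mul_eq_mul_div, div_lt_iff₀ hden]
    nlinarith [abs_nonneg b, abs_nonneg c]
  have hpos : 0 < (B (f + (ε:ℂ) • g) (f + (ε:ℂ) • g)).re := by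
    rw [key]
    nlinarith [neg_abs_le b, neg_abs_le c, abs_nonneg b, abs_nonneg c,
      mul_le_mul_of_nonneg_left hεle hεpos.le]
  have h1 := hagree _ hpos
  have h2 := hagree f hf
  simp only [map_add, map_smul] at h1
  rw [h2] at h1
  have h3 : (ε:ℂ) • W₁ g = (ε:ℂ) • W₂ g := by
    have := add_left_cancel h1
    exact this
  have hεne : (ε:ℂ) ≠ 0 := by
    exact_mod_cast ne_of_gt (by exact_mod_cast hεpos : (0:ℝ) < ε)
  exact smul_right_injective H (by exact_mod_cast hεne) h3
end

section
/- Let H = span{f_n : n ∈ ℕ} with [f_n,f_m] = ε_n δ_{nm}, ε_n ∈ {+1,−1}, both signs occurring at least once. Let W f_n = μ_n f_n with μ_n ≠ 0. If W maps F₊₊ = {f : [f,f] > 0} onto itself bijectively, then all |μ_n| are equal: there exists c > 0 with |μ_n| = c for all n. -/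
/-!
Take `f p`, `f m` with `ε p = 1`, `ε m = -1`. For every `x > 1` the vector `x • f p + f m` is
positive, so its image `(x * μ p) • f p + μ m • f m` is positive, i.e. `‖μ m‖ < x * ‖μ p‖`;
hence `‖μ m‖ ≤ ‖μ p‖`. The inverse of `W` is diagonal with eigenvalues `(μ n)⁻¹` and also maps
positive vectors to positive vectors, which gives the reverse inequality. So `‖μ n‖` is the same
for all `n` of either sign.
-/

open Set

def positiveCone {H : Type*} [AddCommGroup H] [Module ℂ H] (B : H →ₗ⋆[ℂ] H →ₗ[ℂ] ℂ) : Set H :=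
  {v | 0 < (B v v).re}

theorem LinearMap.exists_leftInverse_of_apply_eq_smul {K M ι : Type*} [Field K] [AddCommGroup M]
    [Module K M] {b : ι → M} (hli : LinearIndependent K b)
    (hspan : Submodule.span K (Set.range b) = ⊤) {T : M →ₗ[K] M} {μ : ι → K} (hμ : ∀ i, μ i ≠ 0)
    (hT : ∀ i, T (b i) = μ i • b i) :
    ∃ S : M →ₗ[K] M, (∀ x, S (T x) = x) ∧ ∀ i, S (b i) = (μ i)⁻¹ • b i := by
  let basis := Module.Basis.mk hli hspan.ge
  let S := basis.constr K fun i => (μ i)⁻¹ • b i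
  have hS : ∀ i, S (b i) = (μ i)⁻¹ • b i := fun i => by
    simpa [basis] using basis.constr_basis K (fun i => (μ i)⁻¹ • b i) i
  have hST : S ∘ₗ T = LinearMap.id := basis.ext fun i => by
    simp [basis, hT, hS, smul_smul, hμ]
  exact ⟨S, fun x => LinearMap.congr_fun hST x, hS⟩

section HyperbolicPair

variable {H : Type*} [AddCommGroup H] [Module ℂ H] {B : H →ₗ⋆[ℂ] H →ₗ[ℂ] ℂ} {u v : H}

theorem re_apply_smul_add_smul_self (hu : B u u = 1) (hv : B v v = -1) (huv : B u v = 0)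
    (hvu : B v u = 0) (α β : ℂ) :
    (B (α • u + β • v) (α • u + β • v)).re = ‖α‖ ^ 2 - ‖β‖ ^ 2 := by
  simp only [map_add, map_smulₛₗ, LinearMap.add_apply, LinearMap.smul_apply, hu, hv, huv, hvu,
    smul_eq_mul]
  simp [← Complex.normSq_eq_norm_sq, Complex.normSq_apply]
  ring

theorem norm_le_norm_of_mapsTo_positiveCone (hu : B u u = 1) (hv : B v v = -1)
    (huv : B u v = 0) (hvu : B v u = 0) {T : H →ₗ[ℂ] H} {a b : ℂ}
    (hTu : T u = a • u) (hTv : T v = b • v) (hT : MapsTo T (positiveCone B) (positiveCone B)) :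
    ‖b‖ ≤ ‖a‖ := by
  refine (le_iff_forall_one_lt_le_mul₀ (norm_nonneg a)).mpr fun x hx => ?_
  have hpos : (x : ℂ) • u + (1 : ℂ) • v ∈ positiveCone B := by
    change 0 < (B _ _).re
    rw [re_apply_smul_add_smul_self hu hv huv hvu, Complex.norm_real, Real.norm_eq_abs,
      abs_of_pos (zero_lt_one.trans hx), norm_one]
    nlinarith
  have himage : T ((x : ℂ) • u + (1 : ℂ) • v) = ((x : ℂ) * a) • u + b • v := by
    rw [map_add, map_smul, map_smul, hTu, hTv, smul_smul, one_smul]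
  have himage_pos := hT hpos
  change 0 < (B _ _).re at himage_pos
  rw [himage, re_apply_smul_add_smul_self hu hv huv hvu, norm_mul, Complex.norm_real,
    Real.norm_eq_abs, abs_of_pos (zero_lt_one.trans hx), sub_pos] at himage_pos
  rw [mul_comm]
  exact ((pow_lt_pow_iff_left₀ (norm_nonneg b) (by positivity) two_ne_zero).mp himage_pos).le

theorem norm_eq_norm_of_bijOn_positiveCone (hu : B u u = 1) (hv : B v v = -1)
    (huv : B u v = 0) (hvu : B v u = 0) {T S : H →ₗ[ℂ] H} {a b : ℂ} (ha : a ≠ 0) (hb : b ≠ 0)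
    (hTu : T u = a • u) (hTv : T v = b • v) (hSu : S u = a⁻¹ • u) (hSv : S v = b⁻¹ • v)
    (hST : ∀ x, S (T x) = x) (hT : BijOn T (positiveCone B) (positiveCone B)) :
    ‖a‖ = ‖b‖ := by
  have hS : MapsTo S (positiveCone B) (positiveCone B) :=
    LeftInvOn.mapsTo (fun x _ => hST x) hT.surjOn
  refine le_antisymm ?_ (norm_le_norm_of_mapsTo_positiveCone hu hv huv hvu hTu hTv hT.mapsTo)
  have hinv := norm_le_norm_of_mapsTo_positiveCone hu hv huv hvu hSu hSv hS
  rwa [norm_inv, norm_inv, inv_le_inv₀ (norm_pos_iff.mpr hb) (norm_pos_iff.mpr ha)] at hinv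

end HyperbolicPair

theorem diagonal_bijective_on_positive_implies_constant_modulus_general
    (H : Type*) [AddCommGroup H] [Module ℂ H]
    (B : H →ₗ⋆[ℂ] H →ₗ[ℂ] ℂ)
    (f : ℕ → H) (ε : ℕ → ℝ)
    (hspan : Submodule.span ℂ (Set.range f) = ⊤)
    (horth : ∀ n m : ℕ, n ≠ m → B (f n) (f m) = 0)
    (hnorm : ∀ n : ℕ, B (f n) (f n) = (ε n : ℂ))
    (hsign : ∀ n : ℕ, ε n = 1 ∨ ε n = -1)
    (hplus : ∃ n, ε n = 1) (hminus : ∃ n, ε n = -1)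
    (W : H →ₗ[ℂ] H) (μ : ℕ → ℂ) (hμ : ∀ n, μ n ≠ 0)
    (hW : ∀ n, W (f n) = μ n • f n)
    (hbij : Set.BijOn W {v : H | 0 < (B v v).re} {v : H | 0 < (B v v).re}) :
    ∃ c > (0 : ℝ), ∀ n, ‖μ n‖ = c := by
  have hli : LinearIndependent ℂ f := LinearMap.linearIndependent_of_isOrthoᵢ horth fun n => by
    rcases hsign n with h | h <;> simp [hnorm, h]
  obtain ⟨V, hVW, hV⟩ := LinearMap.exists_leftInverse_of_apply_eq_smul hli hspan hμ hW
  have hnorm_eq : ∀ p m, ε p = 1 → ε m = -1 → ‖μ p‖ = ‖μ m‖ := by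
    intro p m hp hm
    have hpm : p ≠ m := by rintro rfl; linarith
    exact norm_eq_norm_of_bijOn_positiveCone (by simp [hnorm, hp]) (by simp [hnorm, hm])
      (horth p m hpm) (horth m p hpm.symm) (hμ p) (hμ m) (hW p) (hW m) (hV p) (hV m) hVW hbij
  obtain ⟨p, hp⟩ := hplus
  obtain ⟨m, hm⟩ := hminus
  refine ⟨‖μ m‖, norm_pos_iff.mpr (hμ m), fun n => ?_⟩
  rcases hsign n with hn | hn
  · exact hnorm_eq n m hn hm
  · rw [← hnorm_eq p n hp hn, hnorm_eq p m hp hm]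

/-- if a diagonal operator W fₙ = μₙ fₙ (μₙ ≠ 0) on the span of an orthonormal
sequence for an indefinite Hermitian form (both signs occurring) maps the positive vectors
bijectively onto themselves, then all |μₙ| coincide. -/
theorem diagonal_bijective_on_positive_implies_constant_modulus
    (H : Type*) [AddCommGroup H] [Module ℂ H]
    (B : H →ₗ⋆[ℂ] H →ₗ[ℂ] ℂ) (hB : B.IsSymm)
    (f : ℕ → H) (ε : ℕ → ℝ)
    (hspan : Submodule.span ℂ (Set.range f) = ⊤)
    (horth : ∀ n m : ℕ, n ≠ m → B (f n) (f m) = 0)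
    (hnorm : ∀ n : ℕ, B (f n) (f n) = (ε n : ℂ))
    (hsign : ∀ n : ℕ, ε n = 1 ∨ ε n = -1)
    (hplus : ∃ n, ε n = 1) (hminus : ∃ n, ε n = -1)
    (W : H →ₗ[ℂ] H) (μ : ℕ → ℂ) (hμ : ∀ n, μ n ≠ 0)
    (hW : ∀ n, W (f n) = μ n • f n)
    (hbij : Set.BijOn W {v : H | 0 < (B v v).re} {v : H | 0 < (B v v).re}) :
    ∃ c > (0 : ℝ), ∀ n, ‖μ n‖ = c :=
  diagonal_bijective_on_positive_implies_constant_modulus_general H B f ε hspan horth hnorm hsign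
    hplus hminus W μ hμ hW hbij
end
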